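/- Consider the channel with 𝒳 = {1, 4, 5, 7} and 𝒮 = {0, 4}. For every subset 𝒰 ⊆ 𝒯 of four symbols of the associated channel and every codebook of six codewords of length two with entries restricted to 𝒰, the minimum distance of the codebook (minimum over distinct codeword pairs of √(d_SI²(first coordinates) + d_SI²(second coordinates))) is strictly less than 3. Together with the existence of a six-codeword, length-two codebook using seven symbols of 𝒯 with minimum distance 3, this shows that for M > 2 it can be strictly better to use more than M symbols of the associated channel. -/
import Mathlib


open Finset

/-- The distance `d_SI` between two input symbols of the associated channel. -/
noncomputable def dSI (S : Finset ℝ) (hS : S.Nonempty) (t r : ℝ → ℝ) : ℝ :=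
  (S ×ˢ S).inf' (hS.product hS) fun p => |t p.1 + p.1 - (r p.2 + p.2)|

namespace Stmt16Aux

/-- Index of the values of `X = {1,4,5,7}`. -/
def val : Fin 4 → ℤ
  | 0 => 1
  | 1 => 4
  | 2 => 5
  | 3 => 7

lemma val0 : val 0 = 1 := rfl
lemma val1 : val 1 = 4 := rfl
lemma val2 : val 2 = 5 := rfl
lemma val3 : val 3 = 7 := rfl

/-- Model distance between two symbols of the associated channel (value indices). -/
def Dm (a b : Fin 4 × Fin 4) : ℤ :=
  min (min |val a.1 - val b.1| |val a.1 - (val b.2 + 4)|)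
      (min |val a.2 + 4 - val b.1| |val a.2 + 4 - (val b.2 + 4)|)

/-- Two model symbols are close when the model distance is at most 2. -/
def closeM (a b : Fin 4 × Fin 4) : Prop := Dm a b ≤ 2

instance (a b : Fin 4 × Fin 4) : Decidable (closeM a b) := by
  unfold closeM; infer_instance

lemma closeM_refl : ∀ a : Fin 4 × Fin 4, closeM a a := by decide

lemma closeM_symm : ∀ a b : Fin 4 × Fin 4, closeM a b → closeM b a := by decide

lemma closeM_tri : ∀ a b c : Fin 4 × Fin 4,
    ¬closeM a b → ¬closeM b c → ¬closeM a c → False := by decide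

/-- Combinatorial core: any 6 codewords of length 2 whose first entries lie in a
4-element set, with a reflexive symmetric relation whose complement is triangle-free,
contain a pair close in both coordinates. -/
lemma comb {α : Type*} (Q : α → α → Prop)
    (hrefl : ∀ x, Q x x) (hsymm : ∀ x y, Q x y → Q y x)
    (htri : ∀ x y z, ¬Q x y → ¬Q y z → ¬Q x z → False)
    (U : Finset α) (hU : U.card = 4)
    (c : Fin 6 → α × α) (hc : ∀ i, (c i).1 ∈ U) :
    ∃ i j : Fin 6, i ≠ j ∧ Q (c i).1 (c j).1 ∧ Q (c i).2 (c j).2 := by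
  classical
  by_contra hcon
  push_neg at hcon
  have hbad : ∀ i j : Fin 6, i ≠ j → ¬Q (c i).1 (c j).1 ∨ ¬Q (c i).2 (c j).2 := by
    intro i j hij
    by_cases h : Q (c i).1 (c j).1
    · exact Or.inr (hcon i j hij h)
    · exact Or.inl h
  have hsec : ∀ i j : Fin 6, i ≠ j → (c i).1 = (c j).1 → ¬Q (c i).2 (c j).2 := by
    intro i j hij he
    rcases hbad i j hij with h | h
    · exact absurd (he ▸ hrefl (c i).1) h
    · exact h
  set F : α → Finset (Fin 6) := fun u => univ.filter fun i => (c i).1 = u with hF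
  have hmemF : ∀ u (i : Fin 6), i ∈ F u → (c i).1 = u := by
    intro u i hi
    exact (Finset.mem_filter.mp hi).2
  -- every fiber has at most two elements
  have hfib : ∀ u, (F u).card ≤ 2 := by
    intro u
    by_contra h
    push_neg at h
    obtain ⟨i, j, k, hi, hj, hk, hij, hik, hjk⟩ := Finset.two_lt_card_iff.mp h
    exact htri (c i).2 (c j).2 (c k).2
      (hsec i j hij ((hmemF u i hi).trans (hmemF u j hj).symm))
      (hsec j k hjk ((hmemF u j hj).trans (hmemF u k hk).symm))
      (hsec i k hik ((hmemF u i hi).trans (hmemF u k hk).symm))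
  -- the fibers over U partition the six indices
  have hsum6 : ∑ u ∈ U, (F u).card = 6 := by
    simp only [hF]
    rw [← Finset.card_eq_sum_card_fiberwise (fun i _ => hc i)]
    simp
  -- at least two fibers have two elements
  set T : Finset α := U.filter fun u => 2 ≤ (F u).card with hT
  have hT2 : 1 < T.card := by
    by_contra h
    push_neg at h
    have h1 : ∑ u ∈ T, (F u).card ≤ T.card * 2 := by
      have := Finset.sum_le_card_nsmul T (fun u => (F u).card) 2 (fun x _ => hfib x)
      simpa [smul_eq_mul] using this
    have h2 : ∑ u ∈ U.filter (fun u => ¬ 2 ≤ (F u).card), (F u).card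
        ≤ (U.filter (fun u => ¬ 2 ≤ (F u).card)).card * 1 := by
      refine le_trans (Finset.sum_le_card_nsmul _ _ 1 ?_) (by simp)
      intro x hx
      have hx2 := (Finset.mem_filter.mp hx).2
      show (F x).card ≤ 1
      omega
    have hsplit : ∑ u ∈ T, (F u).card
        + ∑ u ∈ U.filter (fun u => ¬ 2 ≤ (F u).card), (F u).card
        = ∑ u ∈ U, (F u).card := by
      rw [hT]
      exact Finset.sum_filter_add_sum_filter_not U _ _
    have hcards : T.card + (U.filter (fun u => ¬ 2 ≤ (F u).card)).card = U.card := by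
      rw [hT]
      exact Finset.card_filter_add_card_filter_not _
    rw [hU] at hcards
    omega
  obtain ⟨u, hu, v, hv, huv⟩ := Finset.one_lt_card.mp hT2
  have hu2 : 2 ≤ (F u).card := (Finset.mem_filter.mp hu).2
  have hv2 : 2 ≤ (F v).card := (Finset.mem_filter.mp hv).2
  obtain ⟨i1, hi1, i2, hi2, hi12⟩ := Finset.one_lt_card.mp (by omega : 1 < (F u).card)
  obtain ⟨j1, hj1, j2, hj2, hj12⟩ := Finset.one_lt_card.mp (by omega : 1 < (F v).card)
  have hci1 : (c i1).1 = u := hmemF u i1 hi1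
  have hci2 : (c i2).1 = u := hmemF u i2 hi2
  have hcj1 : (c j1).1 = v := hmemF v j1 hj1
  have hcj2 : (c j2).1 = v := hmemF v j2 hj2
  have hne : ∀ {x y : Fin 6}, (c x).1 = u → (c y).1 = v → x ≠ y := by
    intro x y hx hy hxy
    exact huv (by rw [← hx, hxy, hy])
  -- a fifth index outside the two fibers
  have hk5 : (univ \ ({i1, i2, j1, j2} : Finset (Fin 6))).Nonempty := by
    rw [Finset.sdiff_nonempty]
    intro hsub
    have h1 : (univ : Finset (Fin 6)).card ≤ ({i1, i2, j1, j2} : Finset (Fin 6)).card :=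
      Finset.card_le_card hsub
    have h2 : ({i1, i2, j1, j2} : Finset (Fin 6)).card ≤ 4 := by
      refine le_trans (Finset.card_insert_le _ _) ?_
      refine Nat.succ_le_succ ?_
      refine le_trans (Finset.card_insert_le _ _) ?_
      refine Nat.succ_le_succ ?_
      refine le_trans (Finset.card_insert_le _ _) ?_
      simp
    simp only [Finset.card_univ, Fintype.card_fin] at h1
    omega
  obtain ⟨k, hk⟩ := hk5
  have hknot := (Finset.mem_sdiff.mp hk).2
  simp only [Finset.mem_insert, Finset.mem_singleton, not_or] at hknot
  obtain ⟨hki1, hki2, hkj1, hkj2⟩ := hknot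
  -- key sublemma: anything outside a 2-fiber is far from its value
  have L1 : ∀ (w : α) (a b m : Fin 6), a ≠ b → (c a).1 = w → (c b).1 = w →
      m ≠ a → m ≠ b → ¬ Q (c m).1 w := by
    intro w a b m hab ha hb hma hmb hQ
    have hA : ¬ Q (c m).2 (c a).2 := by
      rcases hbad m a hma with h | h
      · exact absurd (ha ▸ hQ) h
      · exact h
    have hB : ¬ Q (c m).2 (c b).2 := by
      rcases hbad m b hmb with h | h
      · exact absurd (hb ▸ hQ) h
      · exact h
    have hC : ¬ Q (c a).2 (c b).2 := hsec a b hab (ha.trans hb.symm)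
    exact htri (c m).2 (c a).2 (c b).2 hA hC hB
  have f1 : ¬ Q (c j1).1 u :=
    L1 u i1 i2 j1 hi12 hci1 hci2 (Ne.symm (hne hci1 hcj1)) (Ne.symm (hne hci2 hcj1))
  have fuv : ¬ Q u v := by
    intro h
    exact (hcj1 ▸ f1) (hsymm _ _ h)
  have f2 : ¬ Q (c k).1 u := L1 u i1 i2 k hi12 hci1 hci2 hki1 hki2
  have f3 : ¬ Q (c k).1 v := L1 v j1 j2 k hj12 hcj1 hcj2 hkj1 hkj2
  exact htri (c k).1 u v f2 fuv f3

/-- Bridge: a close pair in the model gives a small real `dSI`. -/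
lemma dSI_le_two (hS : ({0, 4} : Finset ℝ).Nonempty) (t r : ℝ → ℝ) (a b : Fin 4 × Fin 4)
    (ht0 : t 0 = (val a.1 : ℝ)) (ht4 : t 4 = (val a.2 : ℝ))
    (hr0 : r 0 = (val b.1 : ℝ)) (hr4 : r 4 = (val b.2 : ℝ))
    (h : closeM a b) : dSI {0, 4} hS t r ≤ 2 := by
  have key : ∀ s1 s2 : ℝ, s1 ∈ ({0, 4} : Finset ℝ) → s2 ∈ ({0, 4} : Finset ℝ) →
      dSI {0, 4} hS t r ≤ |t s1 + s1 - (r s2 + s2)| := by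
    intro s1 s2 h1 h2
    unfold dSI
    exact Finset.inf'_le (b := (s1, s2)) _ (Finset.mem_product.mpr ⟨h1, h2⟩)
  have hmem0 : (0 : ℝ) ∈ ({0, 4} : Finset ℝ) := by simp
  have hmem4 : (4 : ℝ) ∈ ({0, 4} : Finset ℝ) := by simp
  have hd : Dm a b ≤ 2 := h
  unfold Dm at hd
  rw [min_le_iff, min_le_iff, min_le_iff] at hd
  rcases hd with (h' | h') | (h' | h')
  · have hcast : ((|val a.1 - val b.1| : ℤ) : ℝ) ≤ 2 := by exact_mod_cast h'
    push_cast at hcast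
    refine (key 0 0 hmem0 hmem0).trans ?_
    rw [ht0, hr0]
    calc |_| = _ := by congr 1 <;> ring
      _ ≤ 2 := hcast
  · have hcast : ((|val a.1 - (val b.2 + 4)| : ℤ) : ℝ) ≤ 2 := by exact_mod_cast h'
    push_cast at hcast
    refine (key 0 4 hmem0 hmem4).trans ?_
    rw [ht0, hr4]
    calc |_| = _ := by congr 1 <;> ring
      _ ≤ 2 := hcast
  · have hcast : ((|val a.2 + 4 - val b.1| : ℤ) : ℝ) ≤ 2 := by exact_mod_cast h'
    push_cast at hcast
    refine (key 4 0 hmem4 hmem0).trans ?_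
    rw [ht4, hr0]
    calc |_| = _ := by congr 1 <;> ring
      _ ≤ 2 := hcast
  · have hcast : ((|val a.2 + 4 - (val b.2 + 4)| : ℤ) : ℝ) ≤ 2 := by exact_mod_cast h'
    push_cast at hcast
    refine (key 4 4 hmem4 hmem4).trans ?_
    rw [ht4, hr4]
    calc |_| = _ := by congr 1 <;> ring
      _ ≤ 2 := hcast

lemma dSI_nonneg (S : Finset ℝ) (hS : S.Nonempty) (t r : ℝ → ℝ) :
    0 ≤ dSI S hS t r :=
  Finset.le_inf' _ _ fun p _ => abs_nonneg _

end Stmt16Aux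

open Stmt16Aux in
/-- For `𝒳 = {1, 4, 5, 7}` and `𝒮 = {0, 4}`: every codebook of six distinct length-two
codewords whose entries are restricted to some set `U` of four symbols of the associated
channel has minimum distance strictly less than `3` (so, for `M > 2`, using more than
`M` symbols of the associated channel can be strictly better). -/
theorem stmt16 (X S : Finset ℝ) (hXeq : X = {1, 4, 5, 7}) (hSeq : S = {0, 4})
    (hS : S.Nonempty) :
    ∀ U : Finset (ℝ → ℝ), U.card = 4 → (∀ u ∈ U, ∀ s ∈ S, u s ∈ X) →
      ∀ cw : Fin 6 → (ℝ → ℝ) × (ℝ → ℝ),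
        (∀ i, (cw i).1 ∈ U ∧ (cw i).2 ∈ U) →
        (∀ i j, i ≠ j → cw i ≠ cw j) →
        ∃ i j : Fin 6, i ≠ j ∧
          Real.sqrt (dSI S hS (cw i).1 (cw j).1 ^ 2 +
            dSI S hS (cw i).2 (cw j).2 ^ 2) < 3 := by
  subst hXeq hSeq
  intro U hU hUX cw hcw _hdist
  have hex : ∀ u : ℝ → ℝ, ∃ a : Fin 4 × Fin 4,
      u ∈ U → (u 0 = (Stmt16Aux.val a.1 : ℝ) ∧ u 4 = (Stmt16Aux.val a.2 : ℝ)) := by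
    intro u
    by_cases hu : u ∈ U
    · have h0 : u 0 ∈ ({1, 4, 5, 7} : Finset ℝ) := hUX u hu 0 (by simp)
      have h4 : u 4 ∈ ({1, 4, 5, 7} : Finset ℝ) := hUX u hu 4 (by simp)
      simp only [Finset.mem_insert, Finset.mem_singleton] at h0 h4
      obtain ⟨a0, ha0⟩ : ∃ a0 : Fin 4, u 0 = (Stmt16Aux.val a0 : ℝ) := by
        rcases h0 with h | h | h | h
        exacts [⟨0, by rw [h]; norm_num [Stmt16Aux.val0, Stmt16Aux.val1, Stmt16Aux.val2, Stmt16Aux.val3]⟩, ⟨1, by rw [h]; norm_num [Stmt16Aux.val0, Stmt16Aux.val1, Stmt16Aux.val2, Stmt16Aux.val3]⟩,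
          ⟨2, by rw [h]; norm_num [Stmt16Aux.val0, Stmt16Aux.val1, Stmt16Aux.val2, Stmt16Aux.val3]⟩, ⟨3, by rw [h]; norm_num [Stmt16Aux.val0, Stmt16Aux.val1, Stmt16Aux.val2, Stmt16Aux.val3]⟩]
      obtain ⟨a4, ha4⟩ : ∃ a4 : Fin 4, u 4 = (Stmt16Aux.val a4 : ℝ) := by
        rcases h4 with h | h | h | h
        exacts [⟨0, by rw [h]; norm_num [Stmt16Aux.val0, Stmt16Aux.val1, Stmt16Aux.val2, Stmt16Aux.val3]⟩, ⟨1, by rw [h]; norm_num [Stmt16Aux.val0, Stmt16Aux.val1, Stmt16Aux.val2, Stmt16Aux.val3]⟩,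
          ⟨2, by rw [h]; norm_num [Stmt16Aux.val0, Stmt16Aux.val1, Stmt16Aux.val2, Stmt16Aux.val3]⟩, ⟨3, by rw [h]; norm_num [Stmt16Aux.val0, Stmt16Aux.val1, Stmt16Aux.val2, Stmt16Aux.val3]⟩]
      exact ⟨(a0, a4), fun _ => ⟨ha0, ha4⟩⟩
    · exact ⟨(0, 0), fun h => absurd h hu⟩
  choose g hg using hex
  obtain ⟨i, j, hij, h1, h2⟩ := comb (fun u w => closeM (g u) (g w))
    (fun x => closeM_refl _) (fun x y => closeM_symm _ _)
    (fun x y z => closeM_tri _ _ _) U hU cw (fun i => (hcw i).1)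
  refine ⟨i, j, hij, ?_⟩
  obtain ⟨hi10, hi14⟩ := hg (cw i).1 (hcw i).1
  obtain ⟨hj10, hj14⟩ := hg (cw j).1 (hcw j).1
  obtain ⟨hi20, hi24⟩ := hg (cw i).2 (hcw i).2
  obtain ⟨hj20, hj24⟩ := hg (cw j).2 (hcw j).2
  have d1 : dSI {0, 4} hS (cw i).1 (cw j).1 ≤ 2 :=
    dSI_le_two hS _ _ _ _ hi10 hi14 hj10 hj14 h1
  have d2 : dSI {0, 4} hS (cw i).2 (cw j).2 ≤ 2 :=
    dSI_le_two hS _ _ _ _ hi20 hi24 hj20 hj24 h2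
  have n1 := dSI_nonneg {0, 4} hS (cw i).1 (cw j).1
  have n2 := dSI_nonneg {0, 4} hS (cw i).2 (cw j).2
  have hlt : dSI {0, 4} hS (cw i).1 (cw j).1 ^ 2 +
      dSI {0, 4} hS (cw i).2 (cw j).2 ^ 2 < 9 := by nlinarith
  calc Real.sqrt (dSI {0, 4} hS (cw i).1 (cw j).1 ^ 2 +
        dSI {0, 4} hS (cw i).2 (cw j).2 ^ 2)
      < Real.sqrt 9 := Real.sqrt_lt_sqrt (by positivity) hlt
    _ = 3 := by
        rw [show (9 : ℝ) = 3 ^ 2 by norm_num, Real.sqrt_sq (by norm_num)]
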